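/- Suppose C is a finite set of characters on a finite set X and C' ⊆ C is compatible. Then there is a minimal triangulation of the partition intersection graph pig(C) whose set of displayed characters contains C'. -/

import Mathlib

open scoped NNReal

namespace PMCPP

variable {V : Type} {X : Type}

/-- A graph is chordal if every cycle on four or more vertices has a chord:
for every injective cyclic sequence of `n ≥ 4` vertices with consecutive
vertices adjacent, some pair of non-consecutive vertices of the cycle is adjacent. -/
def IsChordal (G : SimpleGraph V) : Prop :=
  ∀ n : ℕ, 4 ≤ n → ∀ f : ZMod n → V, Function.Injective f →
    (∀ i, G.Adj (f i) (f (i + 1))) →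
    ∃ i j : ZMod n, j ≠ i + 1 ∧ i ≠ j + 1 ∧ G.Adj (f i) (f j)

/-- `H` is a triangulation of `G`: a chordal supergraph on the same vertex set. -/
def IsTriangulation (G H : SimpleGraph V) : Prop := IsChordal H ∧ G ≤ H

/-- The fill edges of a triangulation `H` of `G`. -/
def fillEdges (G H : SimpleGraph V) : Set (Sym2 V) := H.edgeSet \ G.edgeSet

/-- `H` is a minimal triangulation of `G`: no graph obtained from `G` by adding a
proper subset of the fill edges of `H` is a triangulation of `G`. -/
def IsMinimalTriangulation (G H : SimpleGraph V) : Prop :=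
  IsTriangulation G H ∧ ∀ H' : SimpleGraph V, IsTriangulation G H' → H' ≤ H → H' = H

/-- `pf G U`: the potential fill edges of `U`, i.e. pairs of distinct vertices
of `U` that are not edges of `G`. -/
def pf (G : SimpleGraph V) (U : Set V) : Set (Sym2 V) :=
  {e : Sym2 V | ¬e.IsDiag ∧ e ∉ G.edgeSet ∧ ∀ v ∈ e, v ∈ U}

/-- `F(H)`: total weight of the fill edges of the triangulation `H` of `G`
under the fill weight `F`. -/
noncomputable def fillSum (G H : SimpleGraph V) (F : Sym2 V → ℝ≥0) : ℝ≥0 :=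
  ∑ᶠ e ∈ fillEdges G H, F e

/-- `fill_F(U)`: sum of `F` over the potential fill edges of `U`. -/
noncomputable def fillF (G : SimpleGraph V) (F : Sym2 V → ℝ≥0) (U : Set V) : ℝ≥0 :=
  ∑ᶠ e ∈ pf G U, F e

/-- `mfi_F(G)`: the minimum weight of a triangulation of `G`. -/
noncomputable def mfi (G : SimpleGraph V) (F : Sym2 V → ℝ≥0) : ℝ≥0 :=
  sInf {x : ℝ≥0 | ∃ H : SimpleGraph V, IsTriangulation G H ∧ x = fillSum G H F}

/-- `H` is an `F`-minimum triangulation of `G`. -/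
def IsFMinTriangulation (G H : SimpleGraph V) (F : Sym2 V → ℝ≥0) : Prop :=
  IsTriangulation G H ∧ ∀ H' : SimpleGraph V, IsTriangulation G H' →
    fillSum G H F ≤ fillSum G H' F

/-- `H` is an `F`-minimum minimal triangulation of `G`. -/
def IsFMinMinimalTriangulation (G H : SimpleGraph V) (F : Sym2 V → ℝ≥0) : Prop :=
  IsFMinTriangulation G H F ∧ IsMinimalTriangulation G H

/-- There is a walk from `x` to `y` in `G` avoiding `S`. -/
def AvoidReach (G : SimpleGraph V) (S : Set V) (x y : V) : Prop :=
  ∃ p : G.Walk x y, ∀ v ∈ p.support, v ∉ S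

/-- `S` is an `xy`-separator of `G`. -/
def IsSeparator (G : SimpleGraph V) (S : Set V) (x y : V) : Prop :=
  x ∉ S ∧ y ∉ S ∧ G.Reachable x y ∧ ¬AvoidReach G S x y

/-- `S` is a minimal separator of `G`: a minimal `xy`-separator for some `x`, `y`. -/
def IsMinSeparator (G : SimpleGraph V) (S : Set V) : Prop :=
  ∃ x y : V, IsSeparator G S x y ∧ ∀ S' ⊂ S, ¬IsSeparator G S' x y

/-- `Δ(G)`: the set of minimal separators of `G`. -/
def minSeps (G : SimpleGraph V) : Set (Set V) := {S | IsMinSeparator G S}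

/-- `C` is a connected component of `G − S`: a maximal `S`-avoiding-connected
set of vertices disjoint from `S`. -/
def IsCompOf (G : SimpleGraph V) (S C : Set V) : Prop :=
  C.Nonempty ∧ Disjoint C S ∧ (∀ x ∈ C, ∀ y ∈ C, AvoidReach G S x y) ∧
    ∀ C' : Set V, C ⊆ C' → Disjoint C' S →
      (∀ x ∈ C', ∀ y ∈ C', AvoidReach G S x y) → C' = C

/-- `S'` is parallel to `S`: `S'` meets at most one connected component of `G − S`. -/
def Parallel (G : SimpleGraph V) (S S' : Set V) : Prop :=
  {C : Set V | IsCompOf G S C ∧ (C ∩ S').Nonempty}.Subsingleton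

/-- `Φ` is a maximal pairwise-parallel set of minimal separators of `G`. -/
def MaxPairwiseParallel (G : SimpleGraph V) (Φ : Set (Set V)) : Prop :=
  Φ ⊆ minSeps G ∧ Φ.Pairwise (Parallel G) ∧
    ∀ Ψ : Set (Set V), Ψ ⊆ minSeps G → Ψ.Pairwise (Parallel G) → Φ ⊆ Ψ → Ψ = Φ

/-- `G_Φ`: the graph obtained from `G` by saturating every separator in `Φ`. -/
def saturate (G : SimpleGraph V) (Φ : Set (Set V)) : SimpleGraph V where
  Adj u v := u ≠ v ∧ (G.Adj u v ∨ ∃ S ∈ Φ, u ∈ S ∧ v ∈ S)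
  symm := by
    refine ⟨?_⟩; rintro u v ⟨h0, h⟩
    refine ⟨h0.symm, ?_⟩
    rcases h with h | ⟨S, hS, hu, hv⟩
    · exact Or.inl h.symm
    · exact Or.inr ⟨S, hS, hv, hu⟩
  loopless := ⟨fun u h => h.1 rfl⟩

/-- `N(C)`: the vertices outside `C` having a neighbor in `C`. -/
def neighborsOf (G : SimpleGraph V) (C : Set V) : Set V :=
  {v | v ∉ C ∧ ∃ u ∈ C, G.Adj u v}

/-- `(S, C)` is a block of `G`. -/
def IsBlock (G : SimpleGraph V) (S C : Set V) : Prop :=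
  S ∈ minSeps G ∧ IsCompOf G S C

/-- `(S, C)` is a full block of `G`: `N(C) = S`. -/
def IsFullBlock (G : SimpleGraph V) (S C : Set V) : Prop :=
  IsBlock G S C ∧ neighborsOf G C = S

/-- The realization `R(S,C)`: the graph on the vertices `S ∪ C` (realized here as
a graph on `V` all of whose edges lie inside `S ∪ C`) whose edges are the edges of
`G` inside `S ∪ C` together with all pairs of distinct vertices of `S`. -/
def realization (G : SimpleGraph V) (S C : Set V) : SimpleGraph V where
  Adj u v := u ≠ v ∧ u ∈ S ∪ C ∧ v ∈ S ∪ C ∧ (G.Adj u v ∨ (u ∈ S ∧ v ∈ S))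
  symm := by
    refine ⟨?_⟩; rintro u v ⟨h0, h1, h2, h3⟩
    refine ⟨h0.symm, h2, h1, ?_⟩
    rcases h3 with h | ⟨ha, hb⟩
    · exact Or.inl h.symm
    · exact Or.inr ⟨hb, ha⟩
  loopless := ⟨fun u h => h.1 rfl⟩

/-- `K` is a maximal clique of `H`. -/
def IsMaximalClique (H : SimpleGraph V) (K : Set V) : Prop :=
  H.IsClique K ∧ ∀ K' : Set V, H.IsClique K' → K ⊆ K' → K' = K

/-- `K` is a potential maximal clique of `G`: a maximal clique of some
minimal triangulation of `G`. -/
def IsPMC (G : SimpleGraph V) (K : Set V) : Prop :=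
  ∃ H : SimpleGraph V, IsMinimalTriangulation G H ∧ IsMaximalClique H K

/-- The graph obtained from `G` by adding the set of edges `E'`. -/
def addEdges (G : SimpleGraph V) (E' : Set (Sym2 V)) : SimpleGraph V :=
  G ⊔ SimpleGraph.fromEdgeSet E'

/-- A character on `X`: a partition of a subset of `X`, i.e. a collection of
nonempty pairwise disjoint subsets (cells) of `X`. -/
def IsCharacter (χ : Set (Set X)) : Prop :=
  (∀ A ∈ χ, A.Nonempty) ∧ χ.PairwiseDisjoint id

/-- Vertices of the partition intersection graph of `C`:
pairs `(A, χ)` with `χ ∈ C` and `A` a cell of `χ`. -/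
def PigV (C : Set (Set (Set X))) : Type _ :=
  {p : Set X × Set (Set X) // p.2 ∈ C ∧ p.1 ∈ p.2}

/-- The partition intersection graph `pig C`: `(A, χ)` and `(A', χ')` are adjacent
iff they are distinct and `A ∩ A' ≠ ∅`. -/
def pig (C : Set (Set (Set X))) : SimpleGraph (PigV C) where
  Adj p q := p ≠ q ∧ (p.val.1 ∩ q.val.1).Nonempty
  symm := by
    refine ⟨?_⟩; rintro p q ⟨h0, h⟩
    exact ⟨h0.symm, by rwa [Set.inter_comm]⟩
  loopless := ⟨fun p h => h.1 rfl⟩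

/-- A triangulation `H` of `pig C` is proper if no fill edge joins a
monochromatic pair (two vertices with the same character). -/
def IsProper (C : Set (Set (Set X))) (H : SimpleGraph (PigV C)) : Prop :=
  ∀ p q : PigV C, H.Adj p q → ¬(pig C).Adj p q → p.val.2 ≠ q.val.2

/-- The displayed characters of a triangulation `H` of `pig C`: the characters
of `C` broken by no fill edge of `H`. -/
def displayedChars (C : Set (Set (Set X))) (H : SimpleGraph (PigV C)) :
    Set (Set (Set X)) :=
  {χ | χ ∈ C ∧ ∀ p q : PigV C, H.Adj p q → ¬(pig C).Adj p q →
      ¬(p.val.2 = χ ∧ q.val.2 = χ)}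

open Classical in
/-- The fill weight `F_w` on `pig C` induced by a character weight `w`:
`w χ` on monochromatic pairs with shared character `χ`, and `0` otherwise. -/
noncomputable def wWeight (C : Set (Set (Set X))) (w : Set (Set X) → ℝ≥0) :
    Sym2 (PigV C) → ℝ≥0 :=
  Sym2.lift ⟨fun p q => if p.val.2 = q.val.2 then w p.val.2 else 0, by
    intro p q
    dsimp only
    by_cases h : p.val.2 = q.val.2
    · rw [if_pos h, if_pos h.symm, h]
    · rw [if_neg h, if_neg (fun h' => h h'.symm)]⟩

/-- The indicator fill weight `F_C` on `pig C`:
`1` on monochromatic pairs and `0` otherwise. -/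
noncomputable def indWeight (C : Set (Set (Set X))) : Sym2 (PigV C) → ℝ≥0 :=
  wWeight C fun _ => 1

/-- `w(C')`: total weight of a set of characters. -/
noncomputable def wsum (w : Set (Set X) → ℝ≥0) (C' : Set (Set (Set X))) : ℝ≥0 :=
  ∑ᶠ χ ∈ C', w χ

/-- An `X`-tree: a finite tree `T` together with `φ : X → V(T)` such that every
node of degree at most two is in the image of `φ`. -/
structure XTree (X : Type) where
  V : Type
  finV : Finite V
  T : SimpleGraph V
  isTree : T.IsTree
  φ : X → V
  lowDegreeLabeled : ∀ v : V, (T.neighborSet v).ncard ≤ 2 → v ∈ Set.range φ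

/-- The vertex set of the minimal subtree of `T` connecting `φ(A)`:
the union of the (unique) paths between labels of elements of `A`. -/
def subtreeVerts {W : Type} (T : SimpleGraph W) (φ : X → W) (A : Set X) : Set W :=
  {v | ∃ a ∈ A, ∃ b ∈ A, ∃ p : T.Path (φ a) (φ b), v ∈ p.val.support}

/-- `(T, φ)` displays the character `χ`: for distinct cells `A`, `A'` of `χ` the
subtrees `T(A)` and `T(A')` share no node. -/
def DisplaysIn {W : Type} (T : SimpleGraph W) (φ : X → W) (χ : Set (Set X)) : Prop :=
  ∀ A ∈ χ, ∀ A' ∈ χ, A ≠ A' → subtreeVerts T φ A ∩ subtreeVerts T φ A' = ∅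

/-- The `X`-tree `t` displays the character `χ`. -/
def Displays (t : XTree X) (χ : Set (Set X)) : Prop := DisplaysIn t.T t.φ χ

/-- `t` is a perfect phylogeny for `C`: it displays every character of `C`. -/
def IsPerfectPhylogeny (C : Set (Set (Set X))) (t : XTree X) : Prop :=
  ∀ χ ∈ C, Displays t χ

/-- `C` is compatible: some `X`-tree displays every character in `C`. -/
def Compatible (C : Set (Set (Set X))) : Prop := ∃ t : XTree X, IsPerfectPhylogeny C t

/-- Isomorphism of `X`-trees: a graph isomorphism carrying one labeling to the other. -/
def XTreeIso (t t' : XTree X) : Prop :=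
  ∃ ψ : t.T ≃g t'.T, ∀ x : X, ψ (t.φ x) = t'.φ x

/-- `t` is ternary: every internal node (degree at least two) has degree three. -/
def Ternary (t : XTree X) : Prop :=
  ∀ v : t.V, 2 ≤ (t.T.neighborSet v).ncard → (t.T.neighborSet v).ncard = 3

/-- The graph obtained from `T` by contracting the edge `uv` (merging `v` into `u`). -/
def contractGraph {W : Type} (T : SimpleGraph W) (u v : W) :
    SimpleGraph {x : W // x ≠ v} where
  Adj a b := a ≠ b ∧
    (T.Adj a.val b.val ∨ (a.val = u ∧ T.Adj v b.val) ∨ (b.val = u ∧ T.Adj a.val v))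
  symm := by
    refine ⟨?_⟩; rintro a b ⟨h0, h⟩
    refine ⟨h0.symm, ?_⟩
    rcases h with h | ⟨h1, h2⟩ | ⟨h1, h2⟩
    · exact Or.inl h.symm
    · exact Or.inr (Or.inr ⟨h1, h2.symm⟩)
    · exact Or.inr (Or.inl ⟨h1, h2.symm⟩)
  loopless := ⟨fun a h => h.1 rfl⟩

open Classical in
/-- The labeling map after contracting the edge `uv` (merging `v` into `u`). -/
noncomputable def contractMap {W : Type} (φ : X → W) (u v : W) (huv : u ≠ v) :
    X → {x : W // x ≠ v} :=
  fun x => if h : φ x = v then ⟨u, huv⟩ else ⟨φ x, h⟩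

/-- The edge `uv` of the `X`-tree `t` is distinguished by `χ`: contracting `uv`
results in an `X`-tree that does not display `χ`. -/
def EdgeDistinguishedBy (t : XTree X) (u v : t.V) (h : t.T.Adj u v)
    (χ : Set (Set X)) : Prop :=
  ¬DisplaysIn (contractGraph t.T u v) (contractMap t.φ u v h.ne) χ

/-- `t` is distinguished by `C`: each edge of `t` is distinguished by some
character of `C`. -/
def DistinguishedBy (C : Set (Set (Set X))) (t : XTree X) : Prop :=
  ∀ u v : t.V, ∀ h : t.T.Adj u v, ∃ χ ∈ C, EdgeDistinguishedBy t u v h χ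

/-- `Δ_min^F(G)`: the minimal separators of `G` that are minimal separators of
some `F`-minimum minimal triangulation of `G`. -/
def minFillSeps (G : SimpleGraph V) (F : Sym2 V → ℝ≥0) : Set (Set V) :=
  {S | ∃ H : SimpleGraph V, IsFMinMinimalTriangulation G H F ∧ S ∈ minSeps H}

end PMCPP

/-!
A perfect phylogeny `t` for `C'` represents each vertex `(A, χ)` of `pig C` by the subtree `t(A)`
when `χ ∈ C'` and by the whole tree otherwise. The intersection graph of connected subsets of a
tree is chordal, so this is a triangulation of `pig C`; as `t` displays `C'`, it has no edge
between two cells of a character of `C'`, and neither has any minimal triangulation below it.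
-/

theorem ZMod.natCast_ne_natCast_of_lt_of_lt_add {n a b : ℕ} (hab : a < b) (hb : b < a + n) :
    (a : ZMod n) ≠ b := fun h => by
  have hdvd := (Nat.modEq_iff_dvd' hab.le).1 ((ZMod.natCast_eq_natCast_iff _ _ _).1 h)
  have := Nat.le_of_dvd (by omega) hdvd
  omega

namespace SimpleGraph

variable {W : Type} {T : SimpleGraph W}

theorem preconnected_induce_iff_exists_walk {s : Set W} :
    (T.induce s).Preconnected ↔
      ∀ x ∈ s, ∀ y ∈ s, ∃ w : T.Walk x y, ∀ z ∈ w.support, z ∈ s := by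
  constructor
  · rintro h x hx y hy
    obtain ⟨w⟩ := h ⟨x, hx⟩ ⟨y, hy⟩
    refine ⟨w.map (Embedding.induce s).toHom, fun z hz => ?_⟩
    have hz' : z ∈ (w.map (Embedding.induce s).toHom).support := hz
    rw [Walk.support_map, List.mem_map] at hz'
    obtain ⟨z', -, rfl⟩ := hz'
    exact z'.prop
  · rintro h ⟨x, hx⟩ ⟨y, hy⟩
    obtain ⟨w, hw⟩ := h x hx y hy
    exact ⟨w.induce s hw⟩

theorem IsAcyclic.darts_bypass_subset_darts [DecidableEq W] (hT : T.IsAcyclic) {u v : W}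
    (p q : T.Walk u v) : p.bypass.darts ⊆ q.darts := by
  have hpq : p.bypass = q.bypass := congrArg Subtype.val <|
    (hT.subsingleton_path u v).elim ⟨_, p.bypass_isPath⟩ ⟨_, q.bypass_isPath⟩
  exact hpq ▸ q.darts_bypass_subset_darts

theorem exists_walk_of_chain {S : ℕ → Set W} (hS : ∀ m, (T.induce (S m)).Preconnected)
    {t : ℕ → W} (ht : ∀ m, t m ∈ S (m + 1) ∧ t (m + 1) ∈ S (m + 1)) {a b : ℕ} (hab : a ≤ b) :
    ∃ w : T.Walk (t a) (t b),
      ∀ d ∈ w.darts, ∃ m, a < m ∧ m ≤ b ∧ d.fst ∈ S m ∧ d.snd ∈ S m := by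
  induction b, hab using Nat.le_induction with
  | base => exact ⟨Walk.nil, by simp⟩
  | succ b _ ih =>
    obtain ⟨w, hw⟩ := ih
    obtain ⟨seg, hseg⟩ := preconnected_induce_iff_exists_walk.1 (hS (b + 1)) _ (ht b).1 _ (ht b).2
    refine ⟨w.append seg, fun d hd => ?_⟩
    rcases List.mem_append.1 (Walk.darts_append w seg ▸ hd) with hd | hd
    · obtain ⟨m, ham, hmb, hm⟩ := hw d hd
      exact ⟨m, ham, hmb.trans b.le_succ, hm⟩
    · exact ⟨b + 1, by omega, le_rfl, hseg _ (seg.dart_fst_mem_support_of_mem_darts hd),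
        hseg _ (seg.dart_snd_mem_support_of_mem_darts hd)⟩

/-- The path from `t 0` to `t 2` leaves `S 1` along an edge lying both in `S 2` and in one of
`S 3, …, S n`. -/
theorem IsAcyclic.false_of_cyclic_chain (hT : T.IsAcyclic) {n : ℕ} (hn : 4 ≤ n)
    {S : ℕ → Set W} (hS : ∀ m, (T.induce (S m)).Preconnected)
    {t : ℕ → W} (ht : ∀ m, t m ∈ S (m + 1) ∧ t (m + 1) ∈ S (m + 1)) (hwrap : t n = t 0)
    (hfar : ∀ a b, a + 2 ≤ b → b + 2 ≤ a + n → Disjoint (S a) (S b)) : False := by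
  classical
  obtain ⟨short, hshort⟩ := exists_walk_of_chain hS ht (Nat.zero_le 2)
  obtain ⟨long, hlong⟩ := exists_walk_of_chain hS ht (by omega : 2 ≤ n)
  have ht2 : t 2 ∉ S 1 := fun h => Set.disjoint_left.1 (hfar 1 3 le_rfl (by omega)) h (ht 2).1
  obtain ⟨d, hd, hd1, hd1'⟩ := short.bypass.exists_boundary_dart (S 1) (ht 0).1 ht2
  have hd2 : d.snd ∈ S 2 := by
    obtain ⟨m, hm0, hm2, -, hm⟩ := hshort d (short.darts_bypass_subset_darts hd)
    obtain rfl | rfl : m = 1 ∨ m = 2 := by omega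
    exacts [absurd hm hd1', hm]
  have hd' : d.symm ∈ long.darts := by
    simpa using hT.darts_bypass_subset_darts short (long.reverse.copy hwrap rfl) hd
  obtain ⟨m, hm2, hmn, hm, hm'⟩ := hlong d.symm hd'
  simp only [Dart.symm_toProd, Prod.fst_swap, Prod.snd_swap] at hm hm'
  rcases hmn.eq_or_lt with rfl | hmn
  · exact Set.disjoint_left.1 (hfar 2 m (by omega) (by omega)) hd2 hm
  · exact Set.disjoint_left.1 (hfar 1 m (by omega) (by omega)) hd1 hm'

end SimpleGraph

namespace PMCPP

def intersectionGraph {V W : Type} (S : V → Set W) : SimpleGraph V where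
  Adj p q := p ≠ q ∧ (S p ∩ S q).Nonempty
  symm := ⟨fun _ _ h => ⟨h.1.symm, Set.inter_comm (S _) _ ▸ h.2⟩⟩
  loopless := ⟨fun _ h => h.1 rfl⟩

theorem intersectionGraph_adj {V W : Type} {S : V → Set W} {p q : V} :
    (intersectionGraph S).Adj p q ↔ p ≠ q ∧ (S p ∩ S q).Nonempty :=
  Iff.rfl

theorem pig_eq_intersectionGraph {X : Type} (C : Set (Set (Set X))) :
    pig C = intersectionGraph fun p : PigV C => p.val.1 :=
  rfl

theorem intersectionGraph_mono {V W W' : Type} {A : V → Set W} {S : V → Set W'} (φ : W → W')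
    (h : ∀ v, Set.MapsTo φ (A v) (S v)) : intersectionGraph A ≤ intersectionGraph S :=
  fun p q hpq =>
    have ⟨hne, x, hxp, hxq⟩ := intersectionGraph_adj.1 hpq
    ⟨hne, φ x, h p hxp, h q hxq⟩

theorem isChordal_intersectionGraph {V W : Type} {T : SimpleGraph W} (hT : T.IsAcyclic)
    {S : V → Set W} (hS : ∀ v, (T.induce (S v)).Preconnected) :
    IsChordal (intersectionGraph S) := by
  intro n hn f hf hadj
  by_contra! hchordless
  choose t ht using fun i => (hadj i).2
  refine hT.false_of_cyclic_chain hn (S := fun m => S (f m)) (t := fun m => t m)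
    (fun m => hS _) (fun m => ?_) (by simp) fun a b hab hba => ?_
  · push_cast
    exact ⟨(ht m).2, (ht (m + 1)).1⟩
  · refine Set.disjoint_left.2 fun x hxa hxb => hchordless a b ?_ ?_ ⟨hf.ne ?_, x, hxa, hxb⟩
    · exact_mod_cast (ZMod.natCast_ne_natCast_of_lt_of_lt_add (a := a + 1) (b := b)
        (by omega) (by omega)).symm
    · exact_mod_cast ZMod.natCast_ne_natCast_of_lt_of_lt_add (a := a) (b := b + 1)
        (by omega) (by omega)
    · exact ZMod.natCast_ne_natCast_of_lt_of_lt_add (by omega) (by omega)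

theorem exists_isMinimalTriangulation_le {V : Type} [Finite V] {G H : SimpleGraph V}
    (hH : IsTriangulation G H) : ∃ H', IsMinimalTriangulation G H' ∧ H' ≤ H := by
  obtain ⟨H', hle, hmin⟩ := exists_minimal_le_of_wellFoundedLT (IsTriangulation G) H hH
  exact ⟨H', ⟨hmin.prop, fun H'' h'' hle'' => le_antisymm hle'' (hmin.le_of_le h'' hle'')⟩, hle⟩

section Subtrees

variable {X W : Type} {T : SimpleGraph W} {φ : X → W}

theorem mem_subtreeVerts {A : Set X} {a : X} (ha : a ∈ A) : φ a ∈ subtreeVerts T φ A :=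
  ⟨a, ha, a, ha, SimpleGraph.Path.nil, SimpleGraph.Walk.start_mem_support _⟩

theorem preconnected_induce_subtreeVerts (hT : T.Preconnected) (φ : X → W) (A : Set X) :
    (T.induce (subtreeVerts T φ A)).Preconnected := by
  classical
  rw [SimpleGraph.preconnected_induce_iff_exists_walk]
  rintro x ⟨a, ha, b, hb, p, hx⟩ y ⟨a', ha', b', hb', p', hy⟩
  obtain ⟨q⟩ := hT (φ a) (φ a')
  refine ⟨(p.val.takeUntil x hx).reverse.append (q.toPath.val.append (p'.val.takeUntil y hy)),
    fun z hz => ?_⟩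
  simp only [SimpleGraph.Walk.mem_support_append_iff, SimpleGraph.Walk.support_reverse,
    List.mem_reverse] at hz
  rcases hz with hz | hz | hz
  · exact ⟨a, ha, b, hb, p, SimpleGraph.Walk.support_takeUntil_subset_support _ hx hz⟩
  · exact ⟨a, ha, a', ha', q.toPath, hz⟩
  · exact ⟨a', ha', b', hb', p', SimpleGraph.Walk.support_takeUntil_subset_support _ hy hz⟩

end Subtrees

open Classical in
def phylogenySubtrees {X : Type} (C C' : Set (Set (Set X))) (t : XTree X) :
    PigV C → Set t.V :=
  fun p => if p.val.2 ∈ C' then subtreeVerts t.T t.φ p.val.1 else Set.univ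

section PhylogenySubtrees

variable {X : Type} {C C' : Set (Set (Set X))} (t : XTree X)

theorem preconnected_induce_phylogenySubtrees (p : PigV C) :
    (t.T.induce (phylogenySubtrees C C' t p)).Preconnected := by
  by_cases hp : p.val.2 ∈ C'
  · rw [phylogenySubtrees, if_pos hp]
    exact preconnected_induce_subtreeVerts t.isTree.connected.preconnected _ _
  · rw [phylogenySubtrees, if_neg hp]
    exact SimpleGraph.preconnected_induce_iff_exists_walk.2 fun x _ y _ =>
      ⟨(t.isTree.connected.preconnected x y).some, fun _ _ => Set.mem_univ _⟩

theorem mapsTo_phylogenySubtrees (p : PigV C) :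
    Set.MapsTo t.φ p.val.1 (phylogenySubtrees C C' t p) := fun _ hx => by
  by_cases hp : p.val.2 ∈ C'
  · rw [phylogenySubtrees, if_pos hp]
    exact mem_subtreeVerts hx
  · rw [phylogenySubtrees, if_neg hp]
    exact Set.mem_univ _

theorem not_adj_intersectionGraph_phylogenySubtrees {χ : Set (Set X)} (hχ : χ ∈ C')
    (hdisp : Displays t χ) {p q : PigV C} (hp : p.val.2 = χ) (hq : q.val.2 = χ) :
    ¬(intersectionGraph (phylogenySubtrees C C' t)).Adj p q := by
  intro hpq
  obtain ⟨hne, z, hzp, hzq⟩ := intersectionGraph_adj.1 hpq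
  have hcells : p.val.1 ≠ q.val.1 := fun h => hne (Subtype.ext (Prod.ext h (hp.trans hq.symm)))
  rw [phylogenySubtrees, if_pos (hp ▸ hχ)] at hzp
  rw [phylogenySubtrees, if_pos (hq ▸ hχ)] at hzq
  have hdisjoint := hdisp p.val.1 (hp ▸ p.prop.2) q.val.1 (hq ▸ q.prop.2) hcells
  exact (hdisjoint.subset ⟨hzp, hzq⟩ : z ∈ (∅ : Set t.V))

end PhylogenySubtrees

theorem exists_minimal_triangulation_displaying_compatible_subset_general
    {X : Type} [Fintype X] (C C' : Set (Set (Set X)))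
    (hsub : C' ⊆ C) (hcomp : Compatible C') :
    ∃ H : SimpleGraph (PigV C), IsMinimalTriangulation (pig C) H ∧
      C' ⊆ displayedChars C H := by
  obtain ⟨t, ht⟩ := hcomp
  have hchordal : IsChordal (intersectionGraph (phylogenySubtrees C C' t)) :=
    isChordal_intersectionGraph t.isTree.isAcyclic (preconnected_induce_phylogenySubtrees t)
  have hle : pig C ≤ intersectionGraph (phylogenySubtrees C C' t) :=
    pig_eq_intersectionGraph C ▸ intersectionGraph_mono t.φ (mapsTo_phylogenySubtrees t)
  have : Finite (PigV C) := Subtype.finite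
  obtain ⟨H, hmin, hH⟩ := exists_isMinimalTriangulation_le ⟨hchordal, hle⟩
  refine ⟨H, hmin, fun χ hχ => ⟨hsub hχ, ?_⟩⟩
  rintro p q hpq - ⟨hp, hq⟩
  exact not_adj_intersectionGraph_phylogenySubtrees t hχ (ht χ hχ) hp hq (hH hpq)

/-- If `C' ⊆ C` is compatible, then some minimal triangulation of
`pig C` has a set of displayed characters containing `C'`. -/
theorem exists_minimal_triangulation_displaying_compatible_subset
    {X : Type} [Fintype X] (C C' : Set (Set (Set X))) (hC : ∀ χ ∈ C, IsCharacter χ)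
    (hsub : C' ⊆ C) (hcomp : Compatible C') :
    ∃ H : SimpleGraph (PigV C), IsMinimalTriangulation (pig C) H ∧
      C' ⊆ displayedChars C H :=
  exists_minimal_triangulation_displaying_compatible_subset_general C C' hsub hcomp

end PMCPP
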